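/- Let Q denote the standard Gaussian tail function. Then the ratio of Gaussian densities exp(−(t + log(1/Q(t) − 1)/(2t))²/2) / exp(−t²/2) tends to 0 as t → +∞. -/

import Mathlib

/-!
The exponent of the ratio is `-L/2 - (L/(2t))²/2 ≤ -L/2` with `L = log (1/Q(t) - 1)`, and
`L → ∞` because the Gaussian tail `Q(t)` is positive and tends to `0`.
-/

open Real Filter Topology

/-- The standard Gaussian tail function `Q(x) = (1/√(2π)) ∫_x^∞ e^{−t²/2} dt`. -/
noncomputable def gaussQ (x : ℝ) : ℝ :=
  (1 / Real.sqrt (2 * Real.pi)) * ∫ t in Set.Ioi x, Real.exp (-t ^ 2 / 2)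

open MeasureTheory

lemma integrable_exp_neg_sq_div_two : Integrable fun t : ℝ => exp (-t ^ 2 / 2) := by
  convert integrable_exp_neg_mul_sq (b := 1 / 2) (by norm_num) using 2 with t
  ring_nf

lemma gaussQ_pos (x : ℝ) : 0 < gaussQ x := by
  refine mul_pos (by positivity) ((setIntegral_pos_iff_support_of_nonneg_ae ?_
    integrable_exp_neg_sq_div_two.integrableOn).2 ?_)
  · exact ae_of_all _ fun t => (exp_pos _).le
  · simp [Function.support, exp_ne_zero]

lemma tendsto_gaussQ_atTop : Tendsto gaussQ atTop (𝓝[>] 0) := by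
  refine tendsto_nhdsWithin_iff.2 ⟨?_, .of_forall gaussQ_pos⟩
  have htail := (tendsto_integral_Ioi_zero (f := fun t : ℝ => exp (-t ^ 2 / 2))
    (μ := volume) tendsto_id).const_mul (1 / √(2 * π))
  rwa [mul_zero] at htail

lemma tendsto_log_inv_gaussQ_sub_one_atTop :
    Tendsto (fun t => log (1 / gaussQ t - 1)) atTop atTop := by
  refine tendsto_log_atTop.comp (tendsto_atTop_add_const_right _ (-1) ?_)
  simp only [one_div]
  exact tendsto_gaussQ_atTop.inv_tendsto_nhdsGT_zero

lemma exp_neg_sq_add_div_div_exp_neg_sq_le (L : ℝ) {t : ℝ} (ht : t ≠ 0) :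
    exp (-(t + L / (2 * t)) ^ 2 / 2) / exp (-t ^ 2 / 2) ≤ exp (-L / 2) := by
  have hexponent : -(t + L / (2 * t)) ^ 2 / 2 - -t ^ 2 / 2 = -L / 2 - (L / (2 * t)) ^ 2 / 2 := by
    field_simp
    ring
  rw [← exp_sub, hexponent, exp_le_exp]
  linarith [sq_nonneg (L / (2 * t))]

lemma tendsto_exp_neg_sq_add_div_div_exp_neg_sq {L : ℝ → ℝ} (hL : Tendsto L atTop atTop) :
    Tendsto (fun t => exp (-(t + L t / (2 * t)) ^ 2 / 2) / exp (-t ^ 2 / 2)) atTop (𝓝 0) := by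
  have hbound : Tendsto (fun t => exp (-L t / 2)) atTop (𝓝 0) :=
    tendsto_exp_atBot.comp ((tendsto_neg_atTop_atBot.comp hL).atBot_div_const two_pos)
  refine squeeze_zero' (.of_forall fun t => by positivity) ?_ hbound
  filter_upwards [eventually_ne_atTop 0] with t ht
  exact exp_neg_sq_add_div_div_exp_neg_sq_le (L t) ht

/-- The ratio of Gaussian densities
`exp(−(t + log(1/Q(t) − 1)/(2t))²/2) / exp(−t²/2) → 0` as `t → +∞`. -/
theorem density_ratio_tendsto_zero :
    Tendsto (fun t : ℝ =>
        Real.exp (-(t + Real.log (1 / gaussQ t - 1) / (2 * t)) ^ 2 / 2) /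
          Real.exp (-t ^ 2 / 2))
      atTop (𝓝 0) :=
  tendsto_exp_neg_sq_add_div_div_exp_neg_sq tendsto_log_inv_gaussQ_sub_one_atTop
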